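/- Let 0 < ζ < 1 and G_r(z,y) = (1/2)·e^{-|z-y|} - (1/2)·e^{2ζ-z-y}. For every continuous f : [ζ,1] → ℝ that is not identically zero, ∫_ζ¹ ∫_ζ¹ f(z) G_r(z,y) f(y) dy dz > 0. -/

import Mathlib

/-!
Writing `m = min z y`, one has `-|z - y| = 2m - z - y`, so with `u(t) = e^{-t} f(t)` and
`h(t) = (e^{2t} - e^{2ζ})/2` the quadratic form is `∫∫ u(z) h(min z y) u(y) dy dz`. For such
"min-kernels", splitting the inner integral at `y = z` and integrating by parts against
`g(t) = ∫_t^1 u` gives `h(ζ) g(ζ)² + ∫_ζ^1 h'(t) g(t)² dt`. Here `h(ζ) = 0` and `h' = e^{2t} > 0`,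
while `g' = -u` forces `g ≢ 0` on `[ζ, 1]` unless `f ≡ 0` there.
-/

open MeasureTheory Set intervalIntegral

section MinKernel

variable {u h h' : ℝ → ℝ} {a b : ℝ}

lemma hasDerivAt_integral_lower_of_continuous (hu : Continuous u) (b t : ℝ) :
    HasDerivAt (fun t => ∫ y in t..b, u y) (-u t) t :=
  integral_hasDerivAt_left (hu.intervalIntegrable _ _) (hu.stronglyMeasurableAtFilter _ _)
    hu.continuousAt

lemma integral_comp_min_mul_eq_add (hu : Continuous u) (hh : Continuous h) {z : ℝ}
    (hz : z ∈ Icc a b) :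
    ∫ y in a..b, h (min z y) * u y = (∫ y in a..z, h y * u y) + h z * ∫ y in z..b, u y := by
  have hint : Continuous fun y => h (min z y) * u y :=
    (hh.comp (continuous_const.min continuous_id)).mul hu
  rw [← integral_add_adjacent_intervals (hint.intervalIntegrable a z)
    (hint.intervalIntegrable z b), ← intervalIntegral.integral_const_mul]
  congr 1
  · refine integral_congr fun y hy => ?_
    rw [uIcc_of_le hz.1] at hy
    simp only [min_eq_right hy.2]
  · refine integral_congr fun y hy => ?_
    rw [uIcc_of_le hz.2] at hy
    simp only [min_eq_left hy.1]

theorem integral_integral_min_kernel_eq (hu : Continuous u) (hh : ∀ t, HasDerivAt h (h' t) t)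
    (hh' : Continuous h') (hab : a ≤ b) :
    ∫ z in a..b, ∫ y in a..b, u z * h (min z y) * u y
      = h a * (∫ y in a..b, u y) ^ 2 + ∫ t in a..b, h' t * (∫ y in t..b, u y) ^ 2 := by
  set g : ℝ → ℝ := fun t => ∫ y in t..b, u y
  set A : ℝ → ℝ := fun t => ∫ y in a..t, h y * u y
  have hhc : Continuous h := continuous_iff_continuousAt.2 fun t => (hh t).continuousAt
  have hg : ∀ t, HasDerivAt g (-u t) t := hasDerivAt_integral_lower_of_continuous hu b
  have hgc : Continuous g := continuous_iff_continuousAt.2 fun t => (hg t).continuousAt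
  have hA : ∀ t, HasDerivAt A (h t * u t) t := fun t =>
    ((hhc.mul hu).integral_hasStrictDerivAt a t).hasDerivAt
  have hAc : Continuous A := continuous_iff_continuousAt.2 fun t => (hA t).continuousAt
  have inner : ∀ z ∈ uIcc a b,
      ∫ y in a..b, u z * h (min z y) * u y = u z * (A z + h z * g z) := fun z hz => by
    rw [uIcc_of_le hab] at hz
    simp only [mul_assoc, intervalIntegral.integral_const_mul,
      integral_comp_min_mul_eq_add hu hhc hz, A, g]
  have hpart : Continuous fun t => h' t * g t ^ 2 := by fun_prop
  have hcross : Continuous fun t => u t * (A t + h t * g t) := by fun_prop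
  -- `g A + h g²` is an antiderivative of `h' g² - u (A + h g)` vanishing at `b`.
  have ibp := integral_eq_sub_of_hasDerivAt
    (f := fun t => g t * A t + h t * g t ^ 2)
    (f' := fun t => h' t * g t ^ 2 - u t * (A t + h t * g t))
    (fun t _ => (((hg t).mul (hA t)).add ((hh t).mul ((hg t).pow 2))).congr_deriv
      (by simp only [Pi.pow_apply]; ring))
    ((hpart.sub hcross).intervalIntegrable a b)
  rw [intervalIntegral.integral_sub (hpart.intervalIntegrable a b)
    (hcross.intervalIntegrable a b)] at ibp
  have hgb : g b = 0 := integral_same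
  have hAa : A a = 0 := integral_same
  rw [integral_congr inner]
  simp only [hgb, hAa] at ibp
  change _ = h a * g a ^ 2 + _
  linarith

lemma exists_integral_ne_zero_of_exists_ne_zero (hu : Continuous u) (hab : a < b)
    (hne : ∃ t ∈ Icc a b, u t ≠ 0) : ∃ t ∈ Icc a b, ∫ y in t..b, u y ≠ 0 := by
  obtain ⟨t, ht, hut⟩ := hne
  by_contra! hzero
  have hderiv : HasDerivWithinAt (fun t => ∫ y in t..b, u y) 0 (Icc a b) t :=
    (hasDerivWithinAt_const t _ 0).congr_of_mem hzero ht
  exact hut (neg_eq_zero.1 ((uniqueDiffOn_Icc hab t ht).eq_deriv _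
    (hasDerivAt_integral_lower_of_continuous hu b t).hasDerivWithinAt hderiv))

theorem integral_integral_min_kernel_pos (hu : Continuous u) (hh : ∀ t, HasDerivAt h (h' t) t)
    (hh' : Continuous h') (hab : a < b) (ha : 0 ≤ h a) (hpos : ∀ t ∈ Icc a b, 0 < h' t)
    (hne : ∃ t ∈ Icc a b, u t ≠ 0) :
    0 < ∫ z in a..b, ∫ y in a..b, u z * h (min z y) * u y := by
  rw [integral_integral_min_kernel_eq hu hh hh' hab.le]
  obtain ⟨t, ht, hgt⟩ := exists_integral_ne_zero_of_exists_ne_zero hu hab hne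
  have hgc : Continuous fun t => ∫ y in t..b, u y :=
    continuous_iff_continuousAt.2 fun t =>
      (hasDerivAt_integral_lower_of_continuous hu b t).continuousAt
  refine add_pos_of_nonneg_of_pos (by positivity)
    (integral_pos hab (hh'.mul (hgc.pow 2)).continuousOn
      (fun s hs => mul_nonneg (hpos s (Ioc_subset_Icc_self hs)).le (sq_nonneg _))
      ⟨t, ht, mul_pos (hpos t ht) (sq_pos_of_ne_zero hgt)⟩)

end MinKernel

lemma exp_kernel_eq_min (ζ z y : ℝ) :
    (1/2) * Real.exp (-|z - y|) - (1/2) * Real.exp (2*ζ - z - y)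
      = Real.exp (-z) * ((Real.exp (2 * min z y) - Real.exp (2*ζ)) / 2) * Real.exp (-y) := by
  have habs : -|z - y| = -z + 2 * min z y + -y := by
    linarith [max_sub_min_eq_abs' z y, min_add_max z y]
  rw [habs, show 2*ζ - z - y = -z + 2*ζ + -y by ring]
  simp only [Real.exp_add]
  ring

lemma ContinuousOn.exists_continuous_eqOn_Icc {f : ℝ → ℝ} {a b : ℝ} (hab : a ≤ b)
    (hf : ContinuousOn f (Icc a b)) : ∃ F : ℝ → ℝ, Continuous F ∧ EqOn F f (Icc a b) :=
  ⟨IccExtend hab ((Icc a b).domRestrict f), hf.domRestrict.Icc_extend',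
    fun _ hx => IccExtend_of_mem hab _ hx⟩

theorem right_child_kernel_positive_definite_general
    (ζ : ℝ) (hζ1 : ζ < 1)
    (f : ℝ → ℝ) (hf : ContinuousOn f (Set.Icc ζ 1))
    (hne : ∃ z ∈ Set.Icc ζ (1:ℝ), f z ≠ 0) :
    0 < ∫ z in ζ..1, ∫ y in ζ..1,
          f z * ((1/2) * Real.exp (-|z - y|) - (1/2) * Real.exp (2*ζ - z - y)) * f y := by
  obtain ⟨F, hFc, hFf⟩ := hf.exists_continuous_eqOn_Icc hζ1.le
  set u : ℝ → ℝ := fun t => Real.exp (-t) * F t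
  set h : ℝ → ℝ := fun t => (Real.exp (2*t) - Real.exp (2*ζ)) / 2
  have hform : ∀ z ∈ uIcc ζ 1, ∀ y ∈ uIcc ζ 1,
      f z * ((1/2) * Real.exp (-|z - y|) - (1/2) * Real.exp (2*ζ - z - y)) * f y
        = u z * h (min z y) * u y := by
    intro z hz y hy
    rw [uIcc_of_le hζ1.le] at hz hy
    rw [exp_kernel_eq_min, ← hFf hz, ← hFf hy]
    ring
  rw [integral_congr fun z hz => integral_congr (hform z hz)]
  have hh : ∀ t, HasDerivAt h (Real.exp (2*t)) t := fun t => by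
    simpa using (((hasDerivAt_id t).const_mul 2).exp.sub_const (Real.exp (2*ζ))).div_const 2
  refine integral_integral_min_kernel_pos (by fun_prop) hh (by fun_prop) hζ1 (by simp [h])
    (fun t _ => Real.exp_pos _) ?_
  obtain ⟨z, hz, hfz⟩ := hne
  exact ⟨z, hz, mul_ne_zero (Real.exp_ne_zero _) (by rwa [hFf hz])⟩

/-- The right-child kernel `G_r(z,y) = (1/2)e^{-|z-y|} - (1/2)e^{2ζ-z-y}` is positive
definite on `[ζ,1]`: for every continuous `f : [ζ,1] → ℝ` not identically zero,
`∫_ζ¹∫_ζ¹ f(z) G_r(z,y) f(y) dy dz > 0`. -/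
theorem right_child_kernel_positive_definite
    (ζ : ℝ) (hζ0 : 0 < ζ) (hζ1 : ζ < 1)
    (f : ℝ → ℝ) (hf : ContinuousOn f (Set.Icc ζ 1))
    (hne : ∃ z ∈ Set.Icc ζ (1:ℝ), f z ≠ 0) :
    0 < ∫ z in ζ..1, ∫ y in ζ..1,
          f z * ((1/2) * Real.exp (-|z - y|) - (1/2) * Real.exp (2*ζ - z - y)) * f y :=
  right_child_kernel_positive_definite_general ζ hζ1 f hf hne
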